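/- arXiv:2112.10147 — 4 statements merged into one kernel-verified Lean document; each statement's English description precedes it below -/
import Mathlib

section
/- Let α, β ∈ [0,1] with α + β ≤ 1 and let (U,V) be a random vector on [0,1]² whose law is μ = α·μ_M + (1−α−β)·μ_Π + β·μ_W, where μ_M is the law of (T,T), μ_W is the law of (T,1−T) for T uniformly distributed on [0,1], and μ_Π is the Lebesgue measure on [0,1]² (the Fréchet copula A_{α,β}). Let V' be a random variable such that V and V' share the same conditional distribution given U and are conditionally independent given U. Then the law of (V,V') is (α²+β²)·μ_M + (1 − (α+β)²)·μ_Π + 2αβ·μ_W, i.e., ψ(A_{α,β}) is the Fréchet copula A_{α²+β², 2αβ}. In particular, ψ((M+W)/2) = (M+W)/2. -/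
/-!
Write `λ` for Lebesgue measure on `[0,1]`. The Fréchet copula `A_{α,β}` disintegrates along its
first coordinate as `λ ⊗ κ` with `κ u = α δ_u + (1-α-β) λ + β δ_{1-u}`, so `κ` is the conditional
distribution of `V` given `U`, and conditional independence gives
`P(V ∈ A, V' ∈ B) = ∫ κ u A * κ u B dλ(u)`. Expanding the factor `κ u B` turns this integral into
values of `A_{α,β}` on rectangles. Since `u ↦ 1 - u` preserves `λ`, the terms `δ_u δ_u` and
`δ_{1-u} δ_{1-u}` both contribute `μ_M`, the two mixed ones contribute `μ_W`, and the remaining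
mass `(1-α-β)(1+α+β) = 1-(α+β)²` goes to `μ_Π`.
-/

open MeasureTheory ProbabilityTheory Set

noncomputable section

section CondDistrib

variable {Ω S T : Type*} {mΩ : MeasurableSpace Ω} {mS : MeasurableSpace S} [MeasurableSpace T]
  [StandardBorelSpace T] [Nonempty T] {P : Measure Ω} [IsFiniteMeasure P] {X : Ω → S}
  {Y Y' : Ω → T} {κ : Kernel S T} [IsFiniteKernel κ]

lemma condExp_comp_ae_eq_integral_of_map_eq_compProd {F : Type*} [NormedAddCommGroup F]
    [NormedSpace ℝ F] [CompleteSpace F] (hX : Measurable X) (hY : Measurable Y)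
    (hκ : P.map (fun ω => (X ω, Y ω)) = P.map X ⊗ₘ κ) {f : T → F} (hf : StronglyMeasurable f)
    (hfi : Integrable (fun ω => f (Y ω)) P) :
    P[fun ω => f (Y ω) | mS.comap X] =ᵐ[P] fun ω => ∫ y, f y ∂κ (X ω) := by
  filter_upwards [condExp_ae_eq_integral_condDistrib hX hY.aemeasurable hf hfi,
    ae_of_ae_map hX.aemeasurable (condDistrib_ae_eq_of_measure_eq_compProd X hY.aemeasurable hκ)]
    with ω hω hκω
  rw [hω, hκω]

lemma condExp_indicator_comp_ae_eq_of_map_eq_compProd (hX : Measurable X) (hY : Measurable Y)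
    (hκ : P.map (fun ω => (X ω, Y ω)) = P.map X ⊗ₘ κ) {A : Set T} (hA : MeasurableSet A) :
    P[fun ω => A.indicator (1 : T → ℝ) (Y ω) | mS.comap X] =ᵐ[P] fun ω => (κ (X ω)).real A := by
  have hfi : Integrable (fun ω => A.indicator (1 : T → ℝ) (Y ω)) P :=
    (integrable_const 1).indicator (hY hA)
  filter_upwards [condExp_comp_ae_eq_integral_of_map_eq_compProd hX hY hκ
    (f := A.indicator 1) (stronglyMeasurable_const.indicator hA) hfi] with ω hω
  rw [hω, integral_indicator_one hA]

lemma map_prodMk_apply_prod_of_condIndep (hX : Measurable X) (hY : Measurable Y)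
    (hY' : Measurable Y') (hκ : P.map (fun ω => (X ω, Y ω)) = P.map X ⊗ₘ κ) {A B : Set T}
    (hA : MeasurableSet A) (hB : MeasurableSet B)
    (hcond : P[fun ω => A.indicator 1 (Y ω) * B.indicator 1 (Y' ω) | mS.comap X] =ᵐ[P]
      fun ω => P[fun ω => A.indicator (1 : T → ℝ) (Y ω) | mS.comap X] ω *
        P[fun ω => B.indicator (1 : T → ℝ) (Y ω) | mS.comap X] ω) :
    P.map (fun ω => (Y ω, Y' ω)) (A ×ˢ B) = ∫⁻ x, κ x A * κ x B ∂P.map X := by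
  have hprod : P[fun ω => A.indicator 1 (Y ω) * B.indicator 1 (Y' ω) | mS.comap X] =ᵐ[P]
      fun ω => (κ (X ω)).real A * (κ (X ω)).real B :=
    hcond.trans <| (condExp_indicator_comp_ae_eq_of_map_eq_compProd hX hY hκ hA).mul
      (condExp_indicator_comp_ae_eq_of_map_eq_compProd hX hY hκ hB)
  have hind : (fun ω => A.indicator (1 : T → ℝ) (Y ω) * B.indicator 1 (Y' ω)) =
      (Y ⁻¹' A ∩ Y' ⁻¹' B).indicator 1 := by
    rw [inter_indicator_one]; rfl
  calc P.map (fun ω => (Y ω, Y' ω)) (A ×ˢ B)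
      = ENNReal.ofReal
          (∫ ω, P[fun ω => A.indicator 1 (Y ω) * B.indicator 1 (Y' ω) | mS.comap X] ω ∂P) := by
        rw [integral_condExp hX.comap_le, hind, integral_indicator_one ((hY hA).inter (hY' hB)),
          ofReal_measureReal, Measure.map_apply (hY.prodMk hY') (hA.prod hB)]
        rfl
    _ = ∫⁻ ω, κ (X ω) A * κ (X ω) B ∂P := by
        rw [integral_congr_ae hprod, ofReal_integral_eq_lintegral_ofReal
          ((integrable_condExp).congr hprod) (ae_of_all _ fun ω => by positivity)]
        refine lintegral_congr fun ω => ?_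
        rw [ENNReal.ofReal_mul measureReal_nonneg, ofReal_measureReal, ofReal_measureReal]
    _ = ∫⁻ x, κ x A * κ x B ∂P.map X :=
        (lintegral_map ((κ.measurable_coe hA).mul (κ.measurable_coe hB)) hX).symm

end CondDistrib

namespace FrechetCopula

abbrev unitUniform : Measure ℝ := volume.restrict (Icc 0 1)

def comonotonicityMeasure : Measure (ℝ × ℝ) := unitUniform.map fun t => (t, t)

def independenceMeasure : Measure (ℝ × ℝ) := unitUniform.prod unitUniform

def countermonotonicityMeasure : Measure (ℝ × ℝ) := unitUniform.map fun t => (t, 1 - t)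

def frechetMeasure (α β : ℝ) : Measure (ℝ × ℝ) :=
  ENNReal.ofReal α • comonotonicityMeasure + ENNReal.ofReal (1 - α - β) • independenceMeasure +
    ENNReal.ofReal β • countermonotonicityMeasure

def frechetKernel (α β : ℝ) : Kernel ℝ ℝ where
  toFun u := ENNReal.ofReal α • Measure.dirac u + ENNReal.ofReal (1 - α - β) • unitUniform +
    ENNReal.ofReal β • Measure.dirac (1 - u)
  measurable' := by
    refine Measure.measurable_of_measurable_coe _ fun s hs => ?_
    simp only [Measure.add_apply, Measure.smul_apply, Measure.dirac_apply' _ hs, smul_eq_mul]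
    fun_prop (disch := measurability)

instance : IsProbabilityMeasure unitUniform :=
  ⟨by simp⟩

lemma measurePreserving_one_sub_unitUniform :
    MeasurePreserving (fun t : ℝ => 1 - t) unitUniform unitUniform := by
  simpa using (Measure.measurePreserving_sub_left volume (1 : ℝ)).restrict_preimage
    (measurableSet_Icc (a := (0 : ℝ)) (b := 1))

lemma unitUniform_preimage_one_sub {s : Set ℝ} (hs : MeasurableSet s) :
    unitUniform ((fun t => 1 - t) ⁻¹' s) = unitUniform s :=
  measurePreserving_one_sub_unitUniform.measure_preimage hs.nullMeasurableSet

instance (α β : ℝ) : IsFiniteKernel (frechetKernel α β) :=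
  ⟨⟨ENNReal.ofReal α + ENNReal.ofReal (1 - α - β) + ENNReal.ofReal β, by simp, fun u => by
    simp [frechetKernel]⟩⟩

lemma isMarkovKernel_frechetKernel {α β : ℝ} (hα : 0 ≤ α) (hβ : 0 ≤ β) (hαβ : α + β ≤ 1) :
    IsMarkovKernel (frechetKernel α β) :=
  ⟨fun u => ⟨by
    simp only [frechetKernel, Kernel.coe_mk, Measure.add_apply, Measure.smul_apply, measure_univ,
      smul_eq_mul, mul_one]
    rw [← ENNReal.ofReal_add hα (by linarith), ← ENNReal.ofReal_add (by linarith) hβ,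
      show α + (1 - α - β) + β = 1 by ring, ENNReal.ofReal_one]⟩⟩

lemma frechetKernel_apply (α β u : ℝ) {s : Set ℝ} (hs : MeasurableSet s) :
    frechetKernel α β u s = ENNReal.ofReal α * s.indicator 1 u +
      ENNReal.ofReal (1 - α - β) * unitUniform s +
      ENNReal.ofReal β * ((fun t => 1 - t) ⁻¹' s).indicator 1 u := by
  simp only [frechetKernel, Kernel.coe_mk, Measure.add_apply, Measure.smul_apply,
    Measure.dirac_apply' _ hs, smul_eq_mul]
  rfl

lemma frechetMeasure_prod (α β : ℝ) {s t : Set ℝ} (hs : MeasurableSet s) (ht : MeasurableSet t) :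
    frechetMeasure α β (s ×ˢ t) = ENNReal.ofReal α * unitUniform (s ∩ t) +
      ENNReal.ofReal (1 - α - β) * (unitUniform s * unitUniform t) +
      ENNReal.ofReal β * unitUniform (s ∩ (fun t => 1 - t) ⁻¹' t) := by
  simp only [frechetMeasure, Measure.add_apply, Measure.smul_apply, smul_eq_mul,
    comonotonicityMeasure, independenceMeasure, countermonotonicityMeasure, Measure.prod_prod,
    Measure.map_apply (by fun_prop : Measurable fun t : ℝ => (t, t)) (hs.prod ht),
    Measure.map_apply (by fun_prop : Measurable fun t : ℝ => (t, 1 - t)) (hs.prod ht)]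
  rfl

lemma setLIntegral_frechetKernel (α β : ℝ) {s t : Set ℝ} (hs : MeasurableSet s)
    (ht : MeasurableSet t) :
    ∫⁻ u in s, frechetKernel α β u t ∂unitUniform = frechetMeasure α β (s ×ˢ t) := by
  have ht' : MeasurableSet ((fun t : ℝ => 1 - t) ⁻¹' t) := measurable_const.sub measurable_id ht
  simp_rw [frechetKernel_apply α β _ ht]
  rw [lintegral_add_right _ (by fun_prop (disch := assumption)),
    lintegral_add_right _ (by fun_prop)]
  simp only [lintegral_const_mul' _ _ ENNReal.ofReal_ne_top, setLIntegral_const,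
    lintegral_indicator_one ht, lintegral_indicator_one ht', Measure.restrict_apply ht,
    Measure.restrict_apply ht', frechetMeasure_prod α β hs ht, inter_comm t, inter_comm _ s]
  ring

lemma compProd_frechetKernel (α β : ℝ) :
    unitUniform ⊗ₘ frechetKernel α β = frechetMeasure α β :=
  Measure.ext_prod fun hs ht => by
    rw [Measure.compProd_apply_prod hs ht, setLIntegral_frechetKernel α β hs ht]

lemma lintegral_frechetKernel_mul_eq_sum (α β : ℝ) {s t : Set ℝ} (hs : MeasurableSet s)
    (ht : MeasurableSet t) :
    ∫⁻ u, frechetKernel α β u s * frechetKernel α β u t ∂unitUniform =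
      ENNReal.ofReal α * frechetMeasure α β (t ×ˢ s) +
      ENNReal.ofReal (1 - α - β) * unitUniform t * frechetMeasure α β (univ ×ˢ s) +
      ENNReal.ofReal β * frechetMeasure α β (((fun t => 1 - t) ⁻¹' t) ×ˢ s) := by
  have ht' : MeasurableSet ((fun t : ℝ => 1 - t) ⁻¹' t) := measurable_const.sub measurable_id ht
  have hκ : Measurable fun u => frechetKernel α β u s := Kernel.measurable_coe _ hs
  calc ∫⁻ u, frechetKernel α β u s * frechetKernel α β u t ∂unitUniform
      = ∫⁻ u, ENNReal.ofReal α * t.indicator (frechetKernel α β · s) u +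
          ENNReal.ofReal (1 - α - β) * unitUniform t * frechetKernel α β u s +
          ENNReal.ofReal β * ((fun t => 1 - t) ⁻¹' t).indicator (frechetKernel α β · s) u
          ∂unitUniform := by
        refine lintegral_congr fun u => ?_
        rw [frechetKernel_apply α β u ht]
        by_cases hu : u ∈ t <;> by_cases hu' : 1 - u ∈ t <;>
          simp [hu, hu', indicator_of_mem, indicator_of_notMem] <;> ring
    _ = _ := by
      rw [lintegral_add_right _ (by fun_prop), lintegral_add_right _ (hκ.const_mul _)]
      simp only [lintegral_const_mul' _ _ ENNReal.ofReal_ne_top, lintegral_indicator ht,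
        lintegral_indicator ht', lintegral_const_mul _ hκ]
      rw [← setLIntegral_univ (μ := unitUniform), setLIntegral_frechetKernel α β ht hs,
        setLIntegral_frechetKernel α β ht' hs, setLIntegral_frechetKernel α β .univ hs]

lemma frechetMeasure_univ_prod {α β : ℝ} (hα : 0 ≤ α) (hβ : 0 ≤ β) (hαβ : α + β ≤ 1)
    {s : Set ℝ} (hs : MeasurableSet s) : frechetMeasure α β (univ ×ˢ s) = unitUniform s := by
  rw [frechetMeasure_prod α β .univ hs, measure_univ, univ_inter, univ_inter,
    unitUniform_preimage_one_sub hs, one_mul, ← add_mul, ← add_mul,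
    ← ENNReal.ofReal_add hα (by linarith), ← ENNReal.ofReal_add (by linarith) hβ,
    show α + (1 - α - β) + β = 1 by ring, ENNReal.ofReal_one, one_mul]

lemma lintegral_frechetKernel_mul {α β : ℝ} (hα : 0 ≤ α) (hβ : 0 ≤ β) (hαβ : α + β ≤ 1)
    {s t : Set ℝ} (hs : MeasurableSet s) (ht : MeasurableSet t) :
    ∫⁻ u, frechetKernel α β u s * frechetKernel α β u t ∂unitUniform =
      frechetMeasure (α ^ 2 + β ^ 2) (2 * α * β) (s ×ˢ t) := by
  have hr : Measurable fun u : ℝ => 1 - u := measurable_const.sub measurable_id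
  have hcross : unitUniform (t ∩ (fun u => 1 - u) ⁻¹' s) =
      unitUniform (s ∩ (fun u => 1 - u) ⁻¹' t) := by
    rw [← unitUniform_preimage_one_sub (hs.inter (hr ht))]
    congr 1; ext u; simp [and_comm]
  have hdiag : unitUniform ((fun u => 1 - u) ⁻¹' t ∩ (fun u => 1 - u) ⁻¹' s) =
      unitUniform (s ∩ t) := by
    rw [← preimage_inter, unitUniform_preimage_one_sub (ht.inter hs), inter_comm]
  have hsq : ENNReal.ofReal (α ^ 2 + β ^ 2) =
      ENNReal.ofReal α * ENNReal.ofReal α + ENNReal.ofReal β * ENNReal.ofReal β := by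
    rw [ENNReal.ofReal_add (by positivity) (by positivity), pow_two, pow_two,
      ENNReal.ofReal_mul hα, ENNReal.ofReal_mul hβ]
  have hmix : ENNReal.ofReal (2 * α * β) = 2 * ENNReal.ofReal α * ENNReal.ofReal β := by
    rw [ENNReal.ofReal_mul (by positivity), ENNReal.ofReal_mul (by positivity),
      ENNReal.ofReal_ofNat]
  have hind : ENNReal.ofReal (1 - (α ^ 2 + β ^ 2) - 2 * α * β) =
      ENNReal.ofReal (1 - α - β) * (1 + ENNReal.ofReal α + ENNReal.ofReal β) := by
    rw [show 1 - (α ^ 2 + β ^ 2) - 2 * α * β = (1 - α - β) * (1 + α + β) by ring,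
      ENNReal.ofReal_mul (by linarith), ENNReal.ofReal_add (by positivity) hβ,
      ENNReal.ofReal_add zero_le_one hα, ENNReal.ofReal_one]
  rw [lintegral_frechetKernel_mul_eq_sum α β hs ht, frechetMeasure_univ_prod hα hβ hαβ hs,
    frechetMeasure_prod _ _ ht hs, frechetMeasure_prod _ _ (hr ht) hs,
    frechetMeasure_prod _ _ hs ht, unitUniform_preimage_one_sub ht, hcross, hdiag,
    inter_comm t s, inter_comm _ s, hsq, hmix, hind]
  ring

end FrechetCopula

open FrechetCopula

/-- The `ψ`-transform maps the Fréchet copula `A_{α,β} = αM + (1−α−β)Π + βW`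
to the Fréchet copula `A_{α²+β², 2αβ}`: if `(U,V)` has law `A_{α,β}` and `V'` shares the
same conditional distribution as `V` given `U` and is conditionally independent of `V`
given `U`, then the law of `(V,V')` is `(α²+β²)·μ_M + (1−(α+β)²)·μ_Π + 2αβ·μ_W`. -/
theorem psi_frechet
    {Ω : Type*} [MeasurableSpace Ω] (P : Measure Ω) [IsProbabilityMeasure P]
    (U V V' : Ω → ℝ) (hU : Measurable U) (hV : Measurable V) (hV' : Measurable V')
    (α β : ℝ) (hα : α ∈ Icc (0:ℝ) 1) (hβ : β ∈ Icc (0:ℝ) 1) (hαβ : α + β ≤ 1)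
    (μM μPi μW : Measure (ℝ × ℝ))
    (hμM : μM = Measure.map (fun t : ℝ => (t, t)) (volume.restrict (Icc (0:ℝ) 1)))
    (hμW : μW = Measure.map (fun t : ℝ => (t, 1 - t)) (volume.restrict (Icc (0:ℝ) 1)))
    (hμPi : μPi = (volume.restrict (Icc (0:ℝ) 1)).prod (volume.restrict (Icc (0:ℝ) 1)))
    (hlaw : Measure.map (fun ω => (U ω, V ω)) P =
      ENNReal.ofReal α • μM + ENNReal.ofReal (1 - α - β) • μPi + ENNReal.ofReal β • μW)
    (hci : ∀ g h : ℝ → ℝ, Measurable g → (∃ C, ∀ x, |g x| ≤ C) →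
        Measurable h → (∃ C, ∀ x, |h x| ≤ C) →
      P[fun ω => g (V ω) * h (V' ω) | MeasurableSpace.comap U inferInstance]
        =ᵐ[P] fun ω =>
          (P[fun ω' => g (V ω') | MeasurableSpace.comap U inferInstance]) ω *
          (P[fun ω' => h (V ω') | MeasurableSpace.comap U inferInstance]) ω) :
    Measure.map (fun ω => (V ω, V' ω)) P =
      ENNReal.ofReal (α ^ 2 + β ^ 2) • μM + ENNReal.ofReal (1 - (α + β) ^ 2) • μPi +
        ENNReal.ofReal (2 * α * β) • μW := by
  obtain ⟨hα0, -⟩ := hα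
  obtain ⟨hβ0, -⟩ := hβ
  have := isMarkovKernel_frechetKernel hα0 hβ0 hαβ
  subst hμM hμW hμPi
  have hUV : P.map (fun ω => (U ω, V ω)) = unitUniform ⊗ₘ frechetKernel α β := by
    rw [compProd_frechetKernel]; exact hlaw
  have hUlaw : P.map U = unitUniform := by
    rw [← Measure.fst_map_prodMk hV, hUV, Measure.fst_compProd]
  have hbdd (A : Set ℝ) : ∃ C, ∀ x, |A.indicator (1 : ℝ → ℝ) x| ≤ C :=
    ⟨1, fun x => by by_cases hx : x ∈ A <;> simp [hx]⟩
  rw [← hUlaw] at hUV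
  rw [show 1 - (α + β) ^ 2 = 1 - (α ^ 2 + β ^ 2) - 2 * α * β by ring]
  change _ = frechetMeasure (α ^ 2 + β ^ 2) (2 * α * β)
  refine Measure.ext_prod fun {A B} hA hB => ?_
  rw [map_prodMk_apply_prod_of_condIndep hU hV hV' hUV hA hB
      (hci _ _ (measurable_const.indicator hA) (hbdd A) (measurable_const.indicator hB) (hbdd B)),
    hUlaw, lintegral_frechetKernel_mul hα0 hβ0 hαβ hA hB]
end
end

section
/- Let β ∈ [0,1] and let (U,V) be a random vector on [0,1]² with joint distribution function A_{1,β}(u,v) = min{v, u·v^{1−β}} (the Marshall–Olkin copula with parameters α = 1 and β). Let V' be a random variable such that V and V' share the same conditional distribution given U and are conditionally independent given U. Then the joint distribution function of (V,V') is the Marshall–Olkin copula A_{β,β}(s,t) = min{s^{1−β}·t, s·t^{1−β}}, i.e., ψ(A_{1,β}) = A_{β,β}. -/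
/-! Under `A_{1,β}` the variable `U` is uniform and `u ↦ A_{1,β}(u, s) = s^{1-β} min(u, s^β)`
is `s^{1-β}` times the distribution function of `U` cut off at `s^β`, so
`P(V ≤ s | U) = s^{1-β} · 1{U ≤ s^β}`. By conditional independence,
`P(V ≤ s, V' ≤ t) = s^{1-β} t^{1-β} P(U ≤ min(s^β, t^β)) = s^{1-β} t^{1-β} min(s^β, t^β)`,
which is `A_{β,β}(s, t)` because `x^{1-β} x^β = x`. -/

open MeasureTheory ProbabilityTheory Set

noncomputable def marshallOlkinCopula (α β u v : ℝ) : ℝ :=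
  min (u ^ (1 - α) * v) (u * v ^ (1 - β))

lemma marshallOlkinCopula_one_left (β u v : ℝ) :
    marshallOlkinCopula 1 β u v = min v (u * v ^ (1 - β)) := by
  simp [marshallOlkinCopula]

lemma Real.rpow_one_sub_mul_rpow_self {x : ℝ} (hx : 0 ≤ x) (β : ℝ) :
    x ^ (1 - β) * x ^ β = x := by
  rw [← Real.rpow_add' hx (by norm_num), sub_add_cancel, Real.rpow_one]

lemma min_eq_rpow_one_sub_mul_min {s : ℝ} (hs : 0 ≤ s) (u β : ℝ) :
    min s (u * s ^ (1 - β)) = s ^ (1 - β) * min u (s ^ β) := by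
  rw [mul_min_of_nonneg _ _ (Real.rpow_nonneg hs _), Real.rpow_one_sub_mul_rpow_self hs,
    min_comm, mul_comm]

lemma rpow_one_sub_mul_min_rpow {s t : ℝ} (hs : 0 ≤ s) (ht : 0 ≤ t) (β : ℝ) :
    s ^ (1 - β) * t ^ (1 - β) * min (s ^ β) (t ^ β) = marshallOlkinCopula β β s t := by
  have hs' : s ^ (1 - β) * t ^ (1 - β) * s ^ β = s * t ^ (1 - β) := by
    rw [mul_right_comm, Real.rpow_one_sub_mul_rpow_self hs]
  have ht' : s ^ (1 - β) * t ^ (1 - β) * t ^ β = s ^ (1 - β) * t := by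
    rw [mul_assoc, Real.rpow_one_sub_mul_rpow_self ht]
  rw [mul_min_of_nonneg _ _ (by positivity), hs', ht', min_comm]
  rfl

section ConditionalIndicator

variable {Ω : Type*} [MeasurableSpace Ω] {P : Measure Ω} [IsFiniteMeasure P] {U : Ω → ℝ}

lemma measure_preimage_inter_eq_of_forall_Iic (hU : Measurable U) {S T : Set Ω}
    {c : ENNReal} (h : ∀ a, P (U ⁻¹' Iic a ∩ S) = c * P (U ⁻¹' Iic a ∩ T))
    {B : Set ℝ} (hB : MeasurableSet B) :
    P (U ⁻¹' B ∩ S) = c * P (U ⁻¹' B ∩ T) := by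
  have hmap : (P.restrict S).map U = c • (P.restrict T).map U :=
    Measure.ext_of_Iic _ _ fun a => by
      simpa [Measure.map_apply hU, Measure.restrict_apply (hU measurableSet_Iic)] using h a
  simpa [Measure.map_apply hU hB, Measure.restrict_apply (hU hB)] using
    congrArg (fun μ : Measure ℝ => μ B) hmap

lemma condExp_indicator_ae_eq_of_forall_Iic (hU : Measurable U) {S : Set Ω}
    (hS : MeasurableSet S) {E : Set ℝ} (hE : MeasurableSet E) {c : ℝ} (hc : 0 ≤ c)
    (h : ∀ a, P (U ⁻¹' Iic a ∩ S) = ENNReal.ofReal c * P (U ⁻¹' Iic a ∩ U ⁻¹' E)) :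
    P[S.indicator 1 | MeasurableSpace.comap U inferInstance]
      =ᵐ[P] (U ⁻¹' E).indicator fun _ => c := by
  have hUE : MeasurableSet[MeasurableSpace.comap U inferInstance] (U ⁻¹' E) := ⟨E, hE, rfl⟩
  refine (ae_eq_condExp_of_forall_setIntegral_eq hU.comap_le
    ((integrable_const 1).indicator hS)
    (fun _ _ _ => ((integrable_const c).indicator (hU hE)).integrableOn) (fun A hA _ => ?_)
    (stronglyMeasurable_const.indicator hUE).aestronglyMeasurable).symm
  obtain ⟨B, hB, rfl⟩ := hA
  rw [setIntegral_indicator (hU hE), setIntegral_indicator hS, Pi.one_def, setIntegral_const,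
    setIntegral_const, measureReal_def, measureReal_def,
    measure_preimage_inter_eq_of_forall_Iic hU h hB, ENNReal.toReal_mul,
    ENNReal.toReal_ofReal hc, smul_eq_mul, smul_eq_mul, mul_one, mul_comm]

end ConditionalIndicator

section MarshallOlkin

variable {Ω : Type*} [MeasurableSpace Ω] {P : Measure Ω} [IsFiniteMeasure P] {U V : Ω → ℝ}
  {β : ℝ}

lemma measure_preimage_Iic_of_marshallOlkin (hV1 : ∀ᵐ ω ∂P, V ω ≤ 1)
    (hlaw : ∀ u ∈ Icc (0:ℝ) 1, ∀ v ∈ Icc (0:ℝ) 1,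
      P.real (U ⁻¹' Iic u ∩ V ⁻¹' Iic v) = marshallOlkinCopula 1 β u v)
    {a : ℝ} (ha : a ∈ Icc (0:ℝ) 1) :
    P (U ⁻¹' Iic a) = ENNReal.ofReal a := by
  rw [← measure_inter_conull (t := V ⁻¹' Iic 1) (ae_iff.mp hV1), ← ofReal_measureReal,
    hlaw a ha 1 ⟨zero_le_one, le_rfl⟩, marshallOlkinCopula_one_left, Real.one_rpow, mul_one,
    min_eq_right ha.2]

lemma measure_preimage_Iic_inter_of_marshallOlkin (hβ : 0 ≤ β)
    (hrange : ∀ᵐ ω ∂P, U ω ∈ Icc (0:ℝ) 1 ∧ V ω ∈ Icc (0:ℝ) 1)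
    (hlaw : ∀ u ∈ Icc (0:ℝ) 1, ∀ v ∈ Icc (0:ℝ) 1,
      P.real (U ⁻¹' Iic u ∩ V ⁻¹' Iic v) = marshallOlkinCopula 1 β u v)
    {s : ℝ} (hs : s ∈ Icc (0:ℝ) 1) (a : ℝ) :
    P (U ⁻¹' Iic a ∩ V ⁻¹' Iic s)
      = ENNReal.ofReal (s ^ (1 - β)) * P (U ⁻¹' Iic a ∩ U ⁻¹' Iic (s ^ β)) := by
  have hclip (S : Set Ω) : P (U ⁻¹' Iic a ∩ S) = P (U ⁻¹' Iic (min a 1) ∩ S) :=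
    measure_congr <| Filter.eventuallyEq_set.mpr <| by
      filter_upwards [hrange] with ω hω
      simp [hω.1.2]
  rw [hclip, hclip]
  rcases lt_or_ge (min a 1) 0 with hneg | hnonneg
  · have hnull : P (U ⁻¹' Iic (min a 1)) = 0 := measure_eq_zero_iff_ae_notMem.mpr <| by
      filter_upwards [hrange] with ω hω hle using (hneg.trans_le' hle).not_ge hω.1.1
    simp [measure_mono_null inter_subset_left hnull]
  · have hsβ : s ^ β ∈ Icc (0:ℝ) 1 := ⟨Real.rpow_nonneg hs.1 _, Real.rpow_le_one hs.1 hs.2 hβ⟩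
    have hmem : min a 1 ∈ Icc (0:ℝ) 1 := ⟨hnonneg, min_le_right _ _⟩
    have hmin : min a 1 ⊓ s ^ β ∈ Icc (0:ℝ) 1 := ⟨le_min hnonneg hsβ.1, min_le_of_right_le hsβ.2⟩
    rw [← preimage_inter, Iic_inter_Iic,
      measure_preimage_Iic_of_marshallOlkin (hrange.mono fun _ h => h.2.2) hlaw hmin,
      ← ofReal_measureReal, hlaw _ hmem s hs, marshallOlkinCopula_one_left,
      min_eq_rpow_one_sub_mul_min hs.1, ENNReal.ofReal_mul (Real.rpow_nonneg hs.1 _)]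

lemma condExp_indicator_Iic_of_marshallOlkin (hU : Measurable U) (hV : Measurable V)
    (hβ : 0 ≤ β) (hrange : ∀ᵐ ω ∂P, U ω ∈ Icc (0:ℝ) 1 ∧ V ω ∈ Icc (0:ℝ) 1)
    (hlaw : ∀ u ∈ Icc (0:ℝ) 1, ∀ v ∈ Icc (0:ℝ) 1,
      P.real (U ⁻¹' Iic u ∩ V ⁻¹' Iic v) = marshallOlkinCopula 1 β u v)
    {s : ℝ} (hs : s ∈ Icc (0:ℝ) 1) :
    P[(V ⁻¹' Iic s).indicator 1 | MeasurableSpace.comap U inferInstance]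
      =ᵐ[P] (U ⁻¹' Iic (s ^ β)).indicator fun _ => s ^ (1 - β) :=
  condExp_indicator_ae_eq_of_forall_Iic hU (hV measurableSet_Iic) measurableSet_Iic
    (Real.rpow_nonneg hs.1 _) (measure_preimage_Iic_inter_of_marshallOlkin hβ hrange hlaw hs)

lemma integral_indicator_mul_indicator_of_marshallOlkin (hU : Measurable U) (hβ : 0 ≤ β)
    (hV1 : ∀ᵐ ω ∂P, V ω ≤ 1)
    (hlaw : ∀ u ∈ Icc (0:ℝ) 1, ∀ v ∈ Icc (0:ℝ) 1,
      P.real (U ⁻¹' Iic u ∩ V ⁻¹' Iic v) = marshallOlkinCopula 1 β u v)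
    {s t : ℝ} (hs : s ∈ Icc (0:ℝ) 1) (ht : t ∈ Icc (0:ℝ) 1) :
    ∫ ω, (U ⁻¹' Iic (s ^ β)).indicator (fun _ => s ^ (1 - β)) ω
      * (U ⁻¹' Iic (t ^ β)).indicator (fun _ => t ^ (1 - β)) ω ∂P
      = marshallOlkinCopula β β s t := by
  have hmin : s ^ β ⊓ t ^ β ∈ Icc (0:ℝ) 1 :=
    ⟨le_min (Real.rpow_nonneg hs.1 _) (Real.rpow_nonneg ht.1 _),
      min_le_of_left_le (Real.rpow_le_one hs.1 hs.2 hβ)⟩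
  simp_rw [← inter_indicator_mul, ← preimage_inter, Iic_inter_Iic]
  rw [integral_indicator_const _ (hU measurableSet_Iic), measureReal_def,
    measure_preimage_Iic_of_marshallOlkin hV1 hlaw hmin, ENNReal.toReal_ofReal hmin.1,
    smul_eq_mul, mul_comm]
  exact rpow_one_sub_mul_min_rpow hs.1 ht.1 β

end MarshallOlkin

/-- The `ψ`-transform maps the Marshall–Olkin copula `A_{1,β}` to the
Marshall–Olkin copula `A_{β,β}`: if `(U,V)` lives on `[0,1]²` with joint distribution
function `A_{1,β}(u,v) = min{v, u·v^{1−β}}` and `V'` shares the same conditional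
distribution as `V` given `U` and is conditionally independent of `V` given `U`, then
`(V,V')` has joint distribution function `A_{β,β}(s,t) = min{s^{1−β}·t, s·t^{1−β}}`. -/
theorem psi_marshall_olkin
    {Ω : Type*} [MeasurableSpace Ω] (P : Measure Ω) [IsProbabilityMeasure P]
    (U V V' : Ω → ℝ) (hU : Measurable U) (hV : Measurable V) (hV' : Measurable V')
    (β : ℝ) (hβ : β ∈ Icc (0:ℝ) 1)
    (hrange : ∀ᵐ ω ∂P, U ω ∈ Icc (0:ℝ) 1 ∧ V ω ∈ Icc (0:ℝ) 1)
    (hlaw : ∀ u ∈ Icc (0:ℝ) 1, ∀ v ∈ Icc (0:ℝ) 1,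
      (P {ω | U ω ≤ u ∧ V ω ≤ v}).toReal = min v (u * v ^ (1 - β)))
    (hci : ∀ g h : ℝ → ℝ, Measurable g → (∃ C, ∀ x, |g x| ≤ C) →
        Measurable h → (∃ C, ∀ x, |h x| ≤ C) →
      P[fun ω => g (V ω) * h (V' ω) | MeasurableSpace.comap U inferInstance]
        =ᵐ[P] fun ω =>
          (P[fun ω' => g (V ω') | MeasurableSpace.comap U inferInstance]) ω *
          (P[fun ω' => h (V ω') | MeasurableSpace.comap U inferInstance]) ω) :
    ∀ s ∈ Icc (0:ℝ) 1, ∀ t ∈ Icc (0:ℝ) 1,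
      (P {ω | V ω ≤ s ∧ V' ω ≤ t}).toReal =
        min (s ^ (1 - β) * t) (s * t ^ (1 - β)) := by
  intro s hs t ht
  have hlaw' (u : ℝ) (hu : u ∈ Icc (0:ℝ) 1) (v : ℝ) (hv : v ∈ Icc (0:ℝ) 1) :
      P.real (U ⁻¹' Iic u ∩ V ⁻¹' Iic v) = marshallOlkinCopula 1 β u v :=
    (hlaw u hu v hv).trans (marshallOlkinCopula_one_left β u v).symm
  have hcond {r : ℝ} (hr : r ∈ Icc (0:ℝ) 1) :=
    condExp_indicator_Iic_of_marshallOlkin hU hV hβ.1 hrange hlaw' hr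
  have hmeas (r : ℝ) : Measurable ((Iic r).indicator (1 : ℝ → ℝ)) :=
    measurable_one.indicator measurableSet_Iic
  have hbdd (r : ℝ) : ∃ C, ∀ x, |(Iic r).indicator (1 : ℝ → ℝ) x| ≤ C :=
    ⟨1, fun x => by by_cases hx : x ∈ Iic r <;> simp [hx]⟩
  calc (P {ω | V ω ≤ s ∧ V' ω ≤ t}).toReal
      = ∫ ω, (Iic s).indicator 1 (V ω) * (Iic t).indicator 1 (V' ω) ∂P := by
        change P.real (V ⁻¹' Iic s ∩ V' ⁻¹' Iic t) = _
        rw [← integral_indicator_one ((hV measurableSet_Iic).inter (hV' measurableSet_Iic)),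
          inter_indicator_one]
        rfl
    _ = ∫ ω, (P[fun ω => (Iic s).indicator 1 (V ω) * (Iic t).indicator 1 (V' ω)
          | MeasurableSpace.comap U inferInstance]) ω ∂P := (integral_condExp hU.comap_le).symm
    _ = ∫ ω, (U ⁻¹' Iic (s ^ β)).indicator (fun _ => s ^ (1 - β)) ω
          * (U ⁻¹' Iic (t ^ β)).indicator (fun _ => t ^ (1 - β)) ω ∂P :=
        integral_congr_ae <| (hci _ _ (hmeas s) (hbdd s) (hmeas t) (hbdd t)).trans
          ((hcond hs).mul (hcond ht))
    _ = marshallOlkinCopula β β s t :=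
        integral_indicator_mul_indicator_of_marshallOlkin hU hβ.1
          (hrange.mono fun _ h => h.2.2) hlaw' hs ht
end

section
/- Let α ∈ [−1,1] and let (U₁,...,U_d,V) be a random vector on [0,1]^{d+1} whose law has Lebesgue density a(u,v) = 1 + α(1−2v)·∏_{i=1}^d (1−2u_i) (the EFGM copula A_α with parameter α). Let V' be a random variable such that V and V' share the same conditional distribution given U = (U₁,...,U_d) and are conditionally independent given U. Then the joint distribution function of (V,V') is the bivariate EFGM copula with parameter α²/3^d, i.e., P(V ≤ s, V' ≤ t) = st + (α²/3^d)·s(1−s)·t(1−t) for all (s,t) ∈ [0,1]². -/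
/-!
Given `U = u` in the unit cube, `V` has density `1 + c(u)(1 - 2v)` on `[0,1]` with
`c(u) = α ∏ᵢ (1 - 2uᵢ)`, so `P(V ≤ r | U) = G_r(U)` where `G_r(u) = r + c(u) r(1 - r)`,
and `U` is uniform on the cube. Conditional independence gives
`P(V ≤ s, V' ≤ t) = E[G_s(U) G_t(U)]`.
Expanding the product, the terms linear in `c(U)` integrate to a multiple of
`(∫₀¹ (1 - 2x) dx)^d = 0`, and the quadratic term contributes
`α² s(1-s) t(1-t) (∫₀¹ (1 - 2x)² dx)^d = α²/3^d · s(1-s) t(1-t)`.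
-/

open MeasureTheory ProbabilityTheory Set

lemma abs_indicator_one_le_one {ι : Type*} (s : Set ι) (x : ι) :
    |s.indicator (1 : ι → ℝ) x| ≤ 1 := by
  by_cases h : x ∈ s <;> simp [h]

lemma measureReal_le_and_le_eq_integral_indicator {Ω : Type*} [MeasurableSpace Ω] {P : Measure Ω}
    {X Y : Ω → ℝ} (hX : Measurable X) (hY : Measurable Y) (s t : ℝ) :
    P.real {ω | X ω ≤ s ∧ Y ω ≤ t} =
      ∫ ω, (Iic s).indicator 1 (X ω) * (Iic t).indicator 1 (Y ω) ∂P := by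
  rw [show {ω | X ω ≤ s ∧ Y ω ≤ t} = X ⁻¹' Iic s ∩ Y ⁻¹' Iic t from rfl,
    ← integral_indicator_one ((hX measurableSet_Iic).inter (hY measurableSet_Iic))]
  congr 1 with ω
  by_cases h₁ : X ω ≤ s <;> by_cases h₂ : Y ω ≤ t <;> simp [h₁, h₂]

section Density

variable {Ω γ : Type*} [MeasurableSpace Ω] [MeasurableSpace γ] {P : Measure Ω}
  {μ : Measure γ} {Z : Ω → γ} {ρ : γ → ℝ}

lemma integral_comp_eq_integral_mul_density (hZ : Measurable Z) (hρ : Measurable ρ)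
    (hρ0 : ∀ x, 0 ≤ ρ x) (hlaw : P.map Z = μ.withDensity fun x => ENNReal.ofReal (ρ x))
    {f : γ → ℝ} (hf : Measurable f) :
    ∫ ω, f (Z ω) ∂P = ∫ x, f x * ρ x ∂μ := by
  rw [← integral_map hZ.aemeasurable hf.aestronglyMeasurable, hlaw,
    integral_withDensity_eq_integral_toReal_smul hρ.ennreal_ofReal
      (.of_forall fun _ => ENNReal.ofReal_lt_top)]
  simp only [ENNReal.toReal_ofReal (hρ0 _), smul_eq_mul, mul_comm]

lemma integrable_mul_density [IsProbabilityMeasure P] (hZ : Measurable Z) (hρ : Measurable ρ)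
    (hρ0 : ∀ x, 0 ≤ ρ x) (hlaw : P.map Z = μ.withDensity fun x => ENNReal.ofReal (ρ x))
    {f : γ → ℝ} (hf : Measurable f) {C : ℝ} (hfC : ∀ x, |f x| ≤ C) :
    Integrable (fun x => f x * ρ x) μ := by
  have : Integrable f (P.map Z) := by
    have := Measure.isProbabilityMeasure_map (μ := P) hZ.aemeasurable
    exact .of_bound hf.aestronglyMeasurable C (.of_forall hfC)
  rw [hlaw, integrable_withDensity_iff hρ.ennreal_ofReal
    (.of_forall fun _ => ENNReal.ofReal_lt_top)] at this
  simpa only [ENNReal.toReal_ofReal (hρ0 _)] using this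

end Density

section ProductDensity

variable {Ω α β : Type*} [MeasurableSpace Ω] [MeasurableSpace α] [MeasurableSpace β]
  {P : Measure Ω} [IsProbabilityMeasure P] {μ : Measure α} {ν : Measure β}
  [SFinite μ] [SFinite ν] {X : Ω → α} {Y : Ω → β} {ρ : α × β → ℝ}

lemma integral_comp_eq_integral_integral_mul_density (hX : Measurable X) (hY : Measurable Y)
    (hρ : Measurable ρ) (hρ0 : ∀ p, 0 ≤ ρ p)
    (hlaw : P.map (fun ω => (X ω, Y ω)) =
      (μ.prod ν).withDensity fun p => ENNReal.ofReal (ρ p))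
    {f : α × β → ℝ} (hf : Measurable f) {C : ℝ} (hfC : ∀ p, |f p| ≤ C) :
    ∫ ω, f (X ω, Y ω) ∂P = ∫ u, ∫ v, f (u, v) * ρ (u, v) ∂ν ∂μ := by
  rw [integral_comp_eq_integral_mul_density (hX.prodMk hY) hρ hρ0 hlaw hf,
    integral_prod _ (integrable_mul_density (hX.prodMk hY) hρ hρ0 hlaw hf hfC)]

lemma integral_comp_fst_eq_integral_mul_integral_density (hX : Measurable X)
    (hY : Measurable Y) (hρ : Measurable ρ) (hρ0 : ∀ p, 0 ≤ ρ p)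
    (hlaw : P.map (fun ω => (X ω, Y ω)) =
      (μ.prod ν).withDensity fun p => ENNReal.ofReal (ρ p))
    {F : α → ℝ} (hF : Measurable F) {C : ℝ} (hFC : ∀ u, |F u| ≤ C) :
    ∫ ω, F (X ω) ∂P = ∫ u, F u * ∫ v, ρ (u, v) ∂ν ∂μ := by
  simp only [← integral_const_mul]
  exact integral_comp_eq_integral_integral_mul_density hX hY hρ hρ0 hlaw
    (hF.comp measurable_fst) fun p => hFC p.1

lemma condExp_comp_snd_ae_eq_of_density (hX : Measurable X) (hY : Measurable Y)
    (hρ : Measurable ρ) (hρ0 : ∀ p, 0 ≤ ρ p)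
    (hlaw : P.map (fun ω => (X ω, Y ω)) =
      (μ.prod ν).withDensity fun p => ENNReal.ofReal (ρ p))
    {g : β → ℝ} {G : α → ℝ} (hg : Measurable g) (hG : Measurable G) {Cg CG : ℝ}
    (hgC : ∀ v, |g v| ≤ Cg) (hGC : ∀ u, |G u| ≤ CG)
    (hGg : ∀ u, G u * ∫ v, ρ (u, v) ∂ν = ∫ v, g v * ρ (u, v) ∂ν) :
    P[fun ω => g (Y ω) | MeasurableSpace.comap X inferInstance] =ᵐ[P] fun ω => G (X ω) := by
  have hbdd {f : Ω → ℝ} (hf : Measurable f) {C : ℝ} (hfC : ∀ ω, |f ω| ≤ C) : Integrable f P :=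
    .of_bound hf.aestronglyMeasurable C (.of_forall hfC)
  refine (ae_eq_condExp_of_forall_setIntegral_eq hX.comap_le
    (hbdd (hg.comp hY) fun ω => hgC _)
    (fun _ _ _ => (hbdd (hG.comp hX) fun ω => hGC _).integrableOn) ?_
    (hG.comp (comap_measurable X)).aestronglyMeasurable).symm
  rintro _ ⟨B, hB, rfl⟩ -
  have hind {f : Ω → ℝ} :
      ∫ ω in X ⁻¹' B, f ω ∂P = ∫ ω, B.indicator 1 (X ω) * f ω ∂P := by
    rw [← integral_indicator (hX hB)]
    congr 1 with ω
    by_cases h : X ω ∈ B <;> simp [h]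
  have h1B : Measurable (B.indicator (1 : α → ℝ)) := measurable_one.indicator hB
  have habs {u : α} {c C : ℝ} (hc : |c| ≤ C) : |B.indicator 1 u * c| ≤ C := by
    rw [abs_mul]
    exact (mul_le_of_le_one_left (abs_nonneg _) (abs_indicator_one_le_one B u)).trans hc
  calc ∫ ω in X ⁻¹' B, G (X ω) ∂P
      = ∫ u, ∫ v, B.indicator 1 u * G u * ρ (u, v) ∂ν ∂μ :=
        hind.trans <| integral_comp_eq_integral_integral_mul_density hX hY hρ hρ0 hlaw
          ((h1B.comp measurable_fst).mul (hG.comp measurable_fst)) fun p => habs (hGC p.1)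
    _ = ∫ u, ∫ v, B.indicator 1 u * g v * ρ (u, v) ∂ν ∂μ := by
        simp only [mul_assoc, integral_const_mul, hGg]
    _ = ∫ ω in X ⁻¹' B, g (Y ω) ∂P :=
        (hind.trans <| integral_comp_eq_integral_integral_mul_density hX hY hρ hρ0 hlaw
          ((h1B.comp measurable_fst).mul (hg.comp measurable_snd))
          fun p => habs (hgC p.2)).symm

end ProductDensity

lemma abs_one_sub_two_mul_le_one {x : ℝ} (hx : x ∈ Icc (0 : ℝ) 1) : |1 - 2 * x| ≤ 1 :=
  abs_le.2 ⟨by linarith [hx.2], by linarith [hx.1]⟩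

lemma setIntegral_Icc_one_add_mul_one_sub_two_mul (c : ℝ) {r : ℝ} (hr : 0 ≤ r) :
    ∫ v in Icc 0 r, 1 + c * (1 - 2 * v) = r + c * (r * (1 - r)) := by
  rw [integral_Icc_eq_integral_Ioc, ← intervalIntegral.integral_of_le hr]
  have hderiv (x : ℝ) (_ : x ∈ uIcc 0 r) :
      HasDerivAt (fun v : ℝ => v + c * (v - v ^ 2)) (1 + c * (1 - 2 * x)) x :=
    ((hasDerivAt_id' x).add (((hasDerivAt_id' x).sub (hasDerivAt_pow 2 x)).const_mul c)).congr_deriv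
      (by ring)
  rw [intervalIntegral.integral_eq_sub_of_hasDerivAt hderiv
    ((Continuous.intervalIntegrable (by fun_prop)) _ _)]
  ring

lemma setIntegral_Icc_one_sub_two_mul_pow (k : ℕ) :
    ∫ x in Icc (0 : ℝ) 1, (1 - 2 * x) ^ k = (1 - (-1) ^ (k + 1)) / (2 * (k + 1)) := by
  rw [integral_Icc_eq_integral_Ioc, ← intervalIntegral.integral_of_le zero_le_one,
    intervalIntegral.integral_comp_sub_mul (fun x => x ^ k) two_ne_zero, integral_pow]
  norm_num
  field_simp

def unitCube (d : ℕ) : Set (Fin d → ℝ) := univ.pi fun _ => Icc 0 1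

noncomputable def efgmDensity (d : ℕ) (α : ℝ) : (Fin d → ℝ) × ℝ → ℝ :=
  (unitCube d ×ˢ Icc 0 1).indicator fun q => 1 + α * (1 - 2 * q.2) * ∏ i, (1 - 2 * q.1 i)

noncomputable def efgmCondCDF (d : ℕ) (α r : ℝ) : (Fin d → ℝ) → ℝ :=
  (unitCube d).indicator fun u => r + α * (r * (1 - r)) * ∏ i, (1 - 2 * u i)

section EFGM

variable {d : ℕ} {α : ℝ}

lemma measurableSet_unitCube (d : ℕ) : MeasurableSet (unitCube d) :=
  .univ_pi fun _ => measurableSet_Icc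

lemma abs_prod_one_sub_two_mul_le_one {u : Fin d → ℝ} (hu : u ∈ unitCube d) :
    |∏ i, (1 - 2 * u i)| ≤ 1 := by
  rw [Finset.abs_prod]
  exact Finset.prod_le_one (fun _ _ => abs_nonneg _)
    fun i _ => abs_one_sub_two_mul_le_one (hu i (mem_univ i))

lemma measurable_efgmDensity (d : ℕ) (α : ℝ) : Measurable (efgmDensity d α) :=
  Measurable.indicator (by fun_prop) ((measurableSet_unitCube d).prod measurableSet_Icc)

lemma measurable_efgmCondCDF (d : ℕ) (α r : ℝ) : Measurable (efgmCondCDF d α r) :=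
  Measurable.indicator (by fun_prop) (measurableSet_unitCube d)

lemma efgmDensity_nonneg (hα : |α| ≤ 1) (p : (Fin d → ℝ) × ℝ) : 0 ≤ efgmDensity d α p := by
  refine indicator_nonneg (fun q hq => ?_) p
  have : |α * (1 - 2 * q.2) * ∏ i, (1 - 2 * q.1 i)| ≤ 1 := by
    rw [abs_mul, abs_mul]
    exact mul_le_one₀ (mul_le_one₀ hα (abs_nonneg _) (abs_one_sub_two_mul_le_one hq.2))
      (abs_nonneg _) (abs_prod_one_sub_two_mul_le_one hq.1)
  linarith [neg_abs_le (α * (1 - 2 * q.2) * ∏ i, (1 - 2 * q.1 i))]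

lemma abs_efgmCondCDF_le (hα : |α| ≤ 1) {r : ℝ} (hr : r ∈ Icc (0 : ℝ) 1) (u : Fin d → ℝ) :
    |efgmCondCDF d α r u| ≤ 2 := by
  by_cases hu : u ∈ unitCube d
  · rw [efgmCondCDF, indicator_of_mem hu]
    have hc : |α * ∏ i, (1 - 2 * u i)| ≤ 1 := by
      rw [abs_mul]; exact mul_le_one₀ hα (abs_nonneg _) (abs_prod_one_sub_two_mul_le_one hu)
    obtain ⟨hc₁, hc₂⟩ := abs_le.1 hc
    obtain ⟨hr₀, hr₁⟩ := hr
    rw [abs_le]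
    constructor <;> nlinarith [mul_nonneg hr₀ (sub_nonneg.2 hr₁)]
  · simp [efgmCondCDF, hu]

lemma efgmDensity_of_mem {u : Fin d → ℝ} (hu : u ∈ unitCube d) (v : ℝ) :
    efgmDensity d α (u, v) =
      (Icc 0 1).indicator (fun v => 1 + (α * ∏ i, (1 - 2 * u i)) * (1 - 2 * v)) v := by
  by_cases hv : v ∈ Icc (0 : ℝ) 1
  · rw [efgmDensity, indicator_of_mem (mk_mem_prod hu hv), indicator_of_mem hv]
    ring
  · rw [efgmDensity, indicator_of_notMem (fun h => hv h.2), indicator_of_notMem hv]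

lemma efgmDensity_of_notMem {u : Fin d → ℝ} (hu : u ∉ unitCube d) (v : ℝ) :
    efgmDensity d α (u, v) = 0 :=
  indicator_of_notMem (fun h => hu h.1) _

lemma integral_indicator_Iic_mul_efgmDensity {r : ℝ} (hr : r ∈ Icc (0 : ℝ) 1) (u : Fin d → ℝ) :
    ∫ v, (Iic r).indicator 1 v * efgmDensity d α (u, v) = efgmCondCDF d α r u := by
  by_cases hu : u ∈ unitCube d
  · have hIcc : Iic r ∩ Icc 0 1 = Icc 0 r := by
      ext v
      exact ⟨fun h => ⟨h.2.1, h.1⟩, fun h => ⟨h.2, h.1, h.2.trans hr.2⟩⟩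
    simp_rw [efgmDensity_of_mem hu, ← indicator_mul_left, Pi.one_apply, one_mul]
    rw [integral_indicator measurableSet_Iic, setIntegral_indicator measurableSet_Icc, hIcc,
      setIntegral_Icc_one_add_mul_one_sub_two_mul _ hr.1, efgmCondCDF, indicator_of_mem hu]
    ring
  · simp [efgmDensity_of_notMem hu, efgmCondCDF, hu]

lemma integral_efgmDensity (u : Fin d → ℝ) :
    ∫ v, efgmDensity d α (u, v) = (unitCube d).indicator 1 u := by
  by_cases hu : u ∈ unitCube d
  · simp_rw [efgmDensity_of_mem hu]
    rw [integral_indicator measurableSet_Icc,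
      setIntegral_Icc_one_add_mul_one_sub_two_mul _ zero_le_one, indicator_of_mem hu,
      Pi.one_apply]
    ring
  · simp [efgmDensity_of_notMem hu, hu]

lemma efgmCondCDF_mul_indicator_unitCube (r : ℝ) (u : Fin d → ℝ) :
    efgmCondCDF d α r u * (unitCube d).indicator 1 u = efgmCondCDF d α r u := by
  by_cases hu : u ∈ unitCube d <;> simp [efgmCondCDF, hu]

lemma setIntegral_unitCube_prod_pow (k : ℕ) :
    ∫ u in unitCube d, (∏ i, (1 - 2 * u i)) ^ k =
      ((1 - (-1) ^ (k + 1)) / (2 * (k + 1))) ^ d := by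
  simp_rw [← Finset.prod_pow]
  rw [unitCube, volume_pi, Measure.restrict_pi_pi,
    integral_fintype_prod_eq_pow fun x : ℝ => (1 - 2 * x) ^ k,
    setIntegral_Icc_one_sub_two_mul_pow, Fintype.card_fin]

lemma integral_efgmCondCDF_mul (hd : 1 ≤ d) (s t : ℝ) :
    ∫ u, efgmCondCDF d α s u * efgmCondCDF d α t u
      = s * t + α ^ 2 / 3 ^ d * (s * (1 - s)) * (t * (1 - t)) := by
  have hint (k : ℕ) :
      IntegrableOn (fun u : Fin d → ℝ => (∏ i, (1 - 2 * u i)) ^ k) (unitCube d) :=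
    (Continuous.continuousOn (by fun_prop)).integrableOn_compact
      (isCompact_univ_pi fun _ => isCompact_Icc)
  have hexpand : ∀ u ∈ unitCube d, efgmCondCDF d α s u * efgmCondCDF d α t u =
      s * t * (∏ i, (1 - 2 * u i)) ^ 0 + α * s * t * (2 - s - t) * (∏ i, (1 - 2 * u i)) ^ 1
        + α ^ 2 * (s * (1 - s)) * (t * (1 - t)) * (∏ i, (1 - 2 * u i)) ^ 2 := fun u hu => by
    simp only [efgmCondCDF, indicator_of_mem hu]; ring
  rw [← setIntegral_eq_integral_of_forall_compl_eq_zero (s := unitCube d)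
      fun u hu => by simp [efgmCondCDF, hu],
    setIntegral_congr_fun (measurableSet_unitCube d) hexpand,
    integral_add (((hint 0).const_mul _).fun_add ((hint 1).const_mul _)) ((hint 2).const_mul _),
    integral_add ((hint 0).const_mul _) ((hint 1).const_mul _),
    integral_const_mul, integral_const_mul, integral_const_mul, setIntegral_unitCube_prod_pow,
    setIntegral_unitCube_prod_pow, setIntegral_unitCube_prod_pow]
  norm_num [zero_pow (by omega : d ≠ 0), div_pow]
  field_simp

end EFGM

section Law

variable {Ω : Type*} [MeasurableSpace Ω] {P : Measure Ω} [IsProbabilityMeasure P] {d : ℕ} {α : ℝ}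
  {U : Ω → (Fin d → ℝ)} {V : Ω → ℝ}

lemma condExp_indicator_Iic_ae_eq_efgmCondCDF (hU : Measurable U) (hV : Measurable V)
    (hα : |α| ≤ 1)
    (hlaw : P.map (fun ω => (U ω, V ω)) =
      volume.withDensity fun p => ENNReal.ofReal (efgmDensity d α p))
    {r : ℝ} (hr : r ∈ Icc (0 : ℝ) 1) :
    P[fun ω => (Iic r).indicator 1 (V ω) | MeasurableSpace.comap U inferInstance]
      =ᵐ[P] fun ω => efgmCondCDF d α r (U ω) :=
  condExp_comp_snd_ae_eq_of_density (μ := volume) (ν := volume) hU hV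
    (measurable_efgmDensity d α) (efgmDensity_nonneg hα) hlaw
    (measurable_one.indicator measurableSet_Iic) (measurable_efgmCondCDF d α r) (abs_indicator_one_le_one _) (abs_efgmCondCDF_le hα hr)
    fun u => by
      rw [integral_efgmDensity, efgmCondCDF_mul_indicator_unitCube,
        integral_indicator_Iic_mul_efgmDensity hr]

lemma integral_efgmCondCDF_comp_mul (hU : Measurable U) (hV : Measurable V) (hα : |α| ≤ 1)
    (hlaw : P.map (fun ω => (U ω, V ω)) =
      volume.withDensity fun p => ENNReal.ofReal (efgmDensity d α p))
    {s t : ℝ} (hs : s ∈ Icc (0 : ℝ) 1) (ht : t ∈ Icc (0 : ℝ) 1) :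
    ∫ ω, efgmCondCDF d α s (U ω) * efgmCondCDF d α t (U ω) ∂P
      = ∫ u, efgmCondCDF d α s u * efgmCondCDF d α t u := by
  have hbound (u : Fin d → ℝ) : |efgmCondCDF d α s u * efgmCondCDF d α t u| ≤ 2 * 2 := by
    rw [abs_mul]
    exact mul_le_mul (abs_efgmCondCDF_le hα hs u) (abs_efgmCondCDF_le hα ht u)
      (abs_nonneg _) zero_le_two
  rw [integral_comp_fst_eq_integral_mul_integral_density (μ := volume) (ν := volume) hU hV
    (measurable_efgmDensity d α) (efgmDensity_nonneg hα) hlaw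
    ((measurable_efgmCondCDF d α s).fun_mul (measurable_efgmCondCDF d α t)) hbound]
  simp only [integral_efgmDensity, mul_assoc, efgmCondCDF_mul_indicator_unitCube]

end Law

/-- The `ψ`-transform maps the `(d+1)`-dimensional EFGM copula with
parameter `α` to the bivariate EFGM copula with parameter `α²/3^d`: if `(U,V)` has the
EFGM density `1 + α(1−2v)∏(1−2uᵢ)` on `[0,1]^{d+1}` and `V'` shares the same conditional
distribution as `V` given `U` and is conditionally independent of `V` given `U`, then
`P(V ≤ s, V' ≤ t) = st + (α²/3^d)·s(1−s)·t(1−t)`. -/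
theorem psi_efgm
    {Ω : Type*} [MeasurableSpace Ω] (P : Measure Ω) [IsProbabilityMeasure P]
    {d : ℕ} (hd : 1 ≤ d) (U : Ω → (Fin d → ℝ)) (V V' : Ω → ℝ)
    (hU : Measurable U) (hV : Measurable V) (hV' : Measurable V')
    (α : ℝ) (hα : α ∈ Icc (-1:ℝ) 1)
    (hlaw : Measure.map (fun ω => (U ω, V ω)) P =
      volume.withDensity (fun p : (Fin d → ℝ) × ℝ =>
        ENNReal.ofReal
          (Set.indicator ((Set.univ.pi fun _ : Fin d => Icc (0:ℝ) 1) ×ˢ Icc (0:ℝ) 1)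
            (fun q => 1 + α * (1 - 2 * q.2) * ∏ i, (1 - 2 * q.1 i)) p)))
    (hci : ∀ g h : ℝ → ℝ, Measurable g → (∃ C, ∀ x, |g x| ≤ C) →
        Measurable h → (∃ C, ∀ x, |h x| ≤ C) →
      P[fun ω => g (V ω) * h (V' ω) | MeasurableSpace.comap U inferInstance]
        =ᵐ[P] fun ω =>
          (P[fun ω' => g (V ω') | MeasurableSpace.comap U inferInstance]) ω *
          (P[fun ω' => h (V ω') | MeasurableSpace.comap U inferInstance]) ω) :
    ∀ s ∈ Icc (0:ℝ) 1, ∀ t ∈ Icc (0:ℝ) 1,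
      (P {ω | V ω ≤ s ∧ V' ω ≤ t}).toReal =
        s * t + α ^ 2 / 3 ^ d * (s * (1 - s)) * (t * (1 - t)) := by
  intro s hs t ht
  have hα' : |α| ≤ 1 := abs_le.2 hα
  have hIic (r : ℝ) : Measurable ((Iic r).indicator (1 : ℝ → ℝ)) :=
    measurable_one.indicator measurableSet_Iic
  calc (P {ω | V ω ≤ s ∧ V' ω ≤ t}).toReal
      = ∫ ω, (Iic s).indicator 1 (V ω) * (Iic t).indicator 1 (V' ω) ∂P :=
        measureReal_le_and_le_eq_integral_indicator hV hV' s t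
    _ = ∫ ω, efgmCondCDF d α s (U ω) * efgmCondCDF d α t (U ω) ∂P := by
        rw [← integral_condExp hU.comap_le]
        refine integral_congr_ae ((hci _ _ (hIic s) ⟨1, abs_indicator_one_le_one _⟩ (hIic t)
          ⟨1, abs_indicator_one_le_one _⟩).trans ?_)
        exact (condExp_indicator_Iic_ae_eq_efgmCondCDF hU hV hα' hlaw hs).mul
          (condExp_indicator_Iic_ae_eq_efgmCondCDF hU hV hα' hlaw ht)
    _ = ∫ u, efgmCondCDF d α s u * efgmCondCDF d α t u :=
        integral_efgmCondCDF_comp_mul hU hV hα' hlaw hs ht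
    _ = s * t + α ^ 2 / 3 ^ d * (s * (1 - s)) * (t * (1 - t)) :=
        integral_efgmCondCDF_mul hd s t
end

section
/- For every dimension d ≥ 1 there exists a constant c(d), depending only on d, with the following property: for every n ∈ ℕ, every collection of pairwise distinct points x₁, ..., x_n ∈ ℝ^d, every map N : {1,...,n} → {1,...,n} such that for every j, N(j) ≠ j and ‖x_{N(j)} − x_j‖ = min_{k ≠ j} ‖x_k − x_j‖ (i.e., x_{N(j)} is a nearest neighbour of x_j with respect to the Euclidean norm), and every index i ∈ {1,...,n}, the number of j with N(j) = i is at most c(d). -/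
/-!
If `x_j` and `x_k` both have `x_i` as nearest neighbour, then in the triangle `x_i x_j x_k` the
side `x_j x_k` is the longest, so the angle at `x_i` is at least `π/3` and the unit vectors
pointing from `x_i` to `x_j` and to `x_k` are at distance at least `1`. The in-degree of `i` is
therefore bounded by the packing number of the unit sphere of `ℝ^d`, which is finite by
compactness.
-/

open Set

open Metric in
lemma IsCompact.packingNumber_ne_top {X : Type*} [PseudoMetricSpace X] {A : Set X}
    (hA : IsCompact A) {ε : NNReal} (hε : ε ≠ 0) : packingNumber ε A ≠ ⊤ := by
  obtain ⟨C, hCA, hC, hcover⟩ := exists_finite_isCover_of_isCompact (ε := ε / 2) (by simpa) hA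
  refine ne_top_of_le_ne_top hC.encard_lt_top.ne ?_
  calc packingNumber ε A = packingNumber (2 * (ε / 2)) A := by rw [mul_div_cancel₀ _ two_ne_zero]
    _ ≤ externalCoveringNumber (ε / 2) A := packingNumber_two_mul_le_externalCoveringNumber _ _
    _ ≤ coveringNumber (ε / 2) A := externalCoveringNumber_le_coveringNumber _ _
    _ ≤ C.encard := hcover.coveringNumber_le_encard hCA

open Metric in
lemma Finset.card_le_toNat_packingNumber {ι X : Type*} [PseudoMetricSpace X] {A : Set X}
    {ε : NNReal} (hA : packingNumber ε A ≠ ⊤) (s : Finset ι) (u : ι → X)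
    (hu : ∀ j ∈ s, u j ∈ A) (hsep : ∀ j ∈ s, ∀ k ∈ s, j ≠ k → ε < dist (u j) (u k)) :
    s.card ≤ (packingNumber ε A).toNat := by
  have hinj : InjOn u s := fun j hj k hk hjk => by
    by_contra hne
    simpa [hjk] using hsep j hj k hk hne
  have hsep' : IsSeparated ε (u '' s) := by
    rintro _ ⟨j, hj, rfl⟩ _ ⟨k, hk, rfl⟩ hne
    rw [edist_nndist, ENNReal.coe_lt_coe, ← NNReal.coe_lt_coe, coe_nndist]
    exact hsep j hj k hk (ne_of_apply_ne u hne)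
  have hcard := hsep'.encard_le_packingNumber (Set.image_subset_iff.2 hu)
  rw [hinj.encard_image, encard_coe_eq_coe_finsetCard] at hcard
  simpa using ENat.toNat_le_toNat hcard hA

section InnerProductSpace

variable {E : Type*} [NormedAddCommGroup E] [InnerProductSpace ℝ E]

lemma two_mul_inner_le_norm_mul_norm_of_norm_le_norm_sub {u v : E}
    (hu : ‖u‖ ≤ ‖u - v‖) (hv : ‖v‖ ≤ ‖u - v‖) : 2 * inner ℝ u v ≤ ‖u‖ * ‖v‖ := by
  have hsub := norm_sub_sq_real u v
  have hu2 : 2 * inner ℝ u v ≤ ‖v‖ ^ 2 := by nlinarith [pow_le_pow_left₀ (norm_nonneg u) hu 2]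
  have hv2 : 2 * inner ℝ u v ≤ ‖u‖ ^ 2 := by nlinarith [pow_le_pow_left₀ (norm_nonneg v) hv 2]
  rcases le_total ‖u‖ ‖v‖ with h | h
  · nlinarith [norm_nonneg u]
  · nlinarith [norm_nonneg v]

lemma norm_smul_inv_norm_sub_smul_inv_norm_sq {u v : E} (hu : u ≠ 0) (hv : v ≠ 0) :
    ‖‖u‖⁻¹ • u - ‖v‖⁻¹ • v‖ ^ 2 = 2 - 2 * inner ℝ u v / (‖u‖ * ‖v‖) := by
  have hu' : ‖u‖ ≠ 0 := norm_ne_zero_iff.2 hu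
  have hv' : ‖v‖ ≠ 0 := norm_ne_zero_iff.2 hv
  rw [norm_sub_sq_real, norm_smul, norm_smul, real_inner_smul_left, real_inner_smul_right]
  simp only [norm_inv, norm_norm, inv_mul_cancel₀ hu', inv_mul_cancel₀ hv']
  field_simp
  ring

lemma one_le_norm_smul_inv_norm_sub_smul_inv_norm {u v : E} (hu : u ≠ 0) (hv : v ≠ 0)
    (huv : ‖u‖ ≤ ‖u - v‖) (hvu : ‖v‖ ≤ ‖u - v‖) : 1 ≤ ‖‖u‖⁻¹ • u - ‖v‖⁻¹ • v‖ := by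
  have hpos : 0 < ‖u‖ * ‖v‖ := by positivity
  have hinner : 2 * inner ℝ u v / (‖u‖ * ‖v‖) ≤ 1 :=
    (div_le_one hpos).2 (two_mul_inner_le_norm_mul_norm_of_norm_le_norm_sub huv hvu)
  have hsq := norm_smul_inv_norm_sub_smul_inv_norm_sq hu hv
  nlinarith [norm_nonneg (‖u‖⁻¹ • u - ‖v‖⁻¹ • v)]

lemma one_le_dist_smul_inv_norm_sub {p a b : E} (ha : a ≠ p) (hb : b ≠ p) (hab : dist p a ≤ dist b a) (hba : dist p b ≤ dist a b) :
    1 ≤ dist (‖a - p‖⁻¹ • (a - p)) (‖b - p‖⁻¹ • (b - p)) := by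
  have hsub : (a - p) - (b - p) = a - b := sub_sub_sub_cancel_right a b p
  rw [dist_eq_norm]
  refine one_le_norm_smul_inv_norm_sub_smul_inv_norm (sub_ne_zero.2 ha) (sub_ne_zero.2 hb) ?_ ?_
  · rwa [hsub, ← dist_eq_norm, ← dist_eq_norm, dist_comm a p, dist_comm a b]
  · rwa [hsub, ← dist_eq_norm, ← dist_eq_norm, dist_comm b p]

end InnerProductSpace

theorem nearest_neighbour_indegree_bound_general (d : ℕ) :
    ∃ c : ℕ, ∀ (n : ℕ) (x : Fin n → EuclideanSpace ℝ (Fin d)),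
      Function.Injective x →
      ∀ N : Fin n → Fin n,
        (∀ j : Fin n, N j ≠ j ∧ ∀ k : Fin n, k ≠ j → dist (x (N j)) (x j) ≤ dist (x k) (x j)) →
        ∀ i : Fin n, (Finset.univ.filter fun j => N j = i).card ≤ c := by
  set S := Metric.sphere (0 : EuclideanSpace ℝ (Fin d)) 1
  have hS : Metric.packingNumber (1 / 2) S ≠ ⊤ :=
    (isCompact_sphere 0 1).packingNumber_ne_top (by norm_num)
  refine ⟨(Metric.packingNumber (1 / 2) S).toNat, fun n x hx N hN i => ?_⟩
  have hxi : ∀ j, N j = i → x j ≠ x i := fun j hj h => (hN j).1 (hj.trans (hx h).symm)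
  refine Finset.card_le_toNat_packingNumber hS _ (fun j => ‖x j - x i‖⁻¹ • (x j - x i)) ?_ ?_
  · intro j hj
    rw [Finset.mem_filter] at hj
    rw [mem_sphere_zero_iff_norm, norm_smul, norm_inv, norm_norm,
      inv_mul_cancel₀ (norm_ne_zero_iff.2 (sub_ne_zero.2 (hxi j hj.2)))]
  · intro j hj k hk hjk
    rw [Finset.mem_filter] at hj hk
    have hj_nearest := hj.2 ▸ (hN j).2 k hjk.symm
    have hk_nearest := hk.2 ▸ (hN k).2 j hjk
    have hsep := one_le_dist_smul_inv_norm_sub (hxi j hj.2) (hxi k hk.2) hj_nearest hk_nearest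
    exact lt_of_lt_of_le (by norm_num) hsep

/-- In every dimension `d` there is a constant `c(d)` bounding the
in-degree of the nearest-neighbour graph: for pairwise distinct points `x₁,…,x_n` in
Euclidean `ℝ^d` and any nearest-neighbour map `N`, each index `i` is the nearest
neighbour of at most `c(d)` points. -/
theorem nearest_neighbour_indegree_bound (d : ℕ) (hd : 1 ≤ d) :
    ∃ c : ℕ, ∀ (n : ℕ) (x : Fin n → EuclideanSpace ℝ (Fin d)),
      Function.Injective x →
      ∀ N : Fin n → Fin n,
        (∀ j : Fin n, N j ≠ j ∧ ∀ k : Fin n, k ≠ j → dist (x (N j)) (x j) ≤ dist (x k) (x j)) →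
        ∀ i : Fin n, (Finset.univ.filter fun j => N j = i).card ≤ c :=
  nearest_neighbour_indegree_bound_general d
end
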